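/- arXiv:2305.18409 — 2 statements merged into one kernel-verified Lean document; each statement's English description precedes it below -/
import Mathlib

section
/- Let g_1,...,g_K, g_0 ∈ ℝ^m and λ ≥ 0. Consider the strongly concave problem max_{d∈ℝ^m} [ min_{i∈[K]} ⟨g_i, d⟩ − (1/2)‖d‖² + λ⟨g_0, d⟩ ]. Then its (unique) maximizer is d* = g_{w*_λ} + λ g_0, where w*_λ is any minimizer over W of (1/2)‖g_w + λ g_0‖² with g_w = Σ_{i=1}^K w_i g_i; in particular, the optimal value of the max problem equals (1/2) min_{w∈W} ‖g_w + λ g_0‖², and the vector g_{w*_λ} does not depend on the choice of minimizer w*_λ. -/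
open MeasureTheory ProbabilityTheory BigOperators
open scoped RealInnerProductSpace ENNReal NNReal

noncomputable section

/-- `ℝ^m` with the Euclidean inner product and norm. -/
abbrev Euc (m : ℕ) := EuclideanSpace ℝ (Fin m)

/-- The probability simplex `W ⊆ ℝ^K`. -/
def simplex (K : ℕ) : Set (Euc K) := {w | (∀ i, 0 ≤ w i) ∧ ∑ i, w i = 1}

/-- `g_w = ∑ i, w i • g i`, i.e. the matrix-vector product `G w`, where `G` is the
`m × K` matrix with columns `g i`. -/
def comb {m K : ℕ} (g : Fin K → Euc m) (w : Euc K) : Euc m := ∑ i, w i • g i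

/-- Squared Frobenius norm of the `m × K` matrix with columns `g i`. -/
def frobSq {m K : ℕ} (g : Fin K → Euc m) : ℝ := ∑ i, ‖g i‖ ^ 2

/-- Frobenius norm of the `m × K` matrix with columns `g i`. -/
def frob {m K : ℕ} (g : Fin K → Euc m) : ℝ := Real.sqrt (frobSq g)

/-- `Gᵀ v ∈ ℝ^K`, where `G` is the matrix with columns `g i`. -/
def tvec {m K : ℕ} (g : Fin K → Euc m) (v : Euc m) : Euc K :=
  (EuclideanSpace.equiv (Fin K) ℝ).symm fun i => ⟪g i, v⟫

/-- `p` is the Euclidean projection of `z` onto the set `C`. -/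
def projOn {n : ℕ} (C : Set (Euc n)) (z p : Euc n) : Prop :=
  p ∈ C ∧ ∀ u ∈ C, ‖z - p‖ ≤ ‖z - u‖

/-!
Put `v = g_{w*} + λ g₀`; it is the point of least norm in the convex set
`{g_u + λ g₀ | u ∈ W}`, so `⟪v, s - v⟫ ≥ 0` on that set. Tested at the vertices of `W`
this gives `min_i ⟪g_i, v⟫ = ⟪g_{w*}, v⟫`, hence the objective takes the value `‖v‖²/2`
at `v`. Conversely `min_i ⟪g_i, d⟫ ≤ ⟪g_{w*}, d⟫` bounds the objective at any `d` by
`‖v‖²/2 - ‖v - d‖²/2`, which gives optimality and uniqueness. A convex set has at most one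
point of least norm, so `g_{w*}` does not depend on the minimizer `w*`.
-/

section MinNorm

variable {E : Type*} [NormedAddCommGroup E] [InnerProductSpace ℝ E] {C : Set E} {v : E}

theorem Convex.inner_sub_nonneg_of_isMinOn_norm (hC : Convex ℝ C) (hv : v ∈ C)
    (hmin : IsMinOn (‖·‖) C v) {s : E} (hs : s ∈ C) : 0 ≤ ⟪v, s - v⟫ := by
  have : Nonempty C := ⟨⟨v, hv⟩⟩
  have hinf : ‖0 - v‖ = ⨅ w : C, ‖0 - (w : E)‖ := by
    simp only [zero_sub, norm_neg]
    refine le_antisymm (le_ciInf fun w => isMinOn_iff.mp hmin w w.2) (ciInf_le ?_ (⟨v, hv⟩ : C))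
    exact ⟨0, by rintro _ ⟨w, rfl⟩; positivity⟩
  have := (norm_eq_iInf_iff_real_inner_le_zero hC hv).mp hinf s hs
  rwa [zero_sub, inner_neg_left, neg_nonpos] at this

theorem Convex.eq_of_isMinOn_norm (hC : Convex ℝ C) {b : E} (hv : v ∈ C) (hb : b ∈ C)
    (hvmin : IsMinOn (‖·‖) C v) (hbmin : IsMinOn (‖·‖) C b) : v = b := by
  have h₁ := hC.inner_sub_nonneg_of_isMinOn_norm hv hvmin hb
  have h₂ := hC.inner_sub_nonneg_of_isMinOn_norm hb hbmin hv
  have hsum : ⟪v, b - v⟫ + ⟪b, v - b⟫ = -‖v - b‖ ^ 2 := by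
    rw [← real_inner_self_eq_norm_sq]
    simp only [inner_sub_left, inner_sub_right, real_inner_comm v b]
    ring
  have : ‖v - b‖ ^ 2 = 0 := le_antisymm (by linarith) (sq_nonneg _)
  simpa [sub_eq_zero] using this

end MinNorm

theorem ciInf_le_sum_mul {ι : Type*} [Fintype ι] (a w : ι → ℝ) (hw₀ : ∀ i, 0 ≤ w i)
    (hw₁ : ∑ i, w i = 1) : ⨅ i, a i ≤ ∑ i, w i * a i :=
  calc ⨅ i, a i = ∑ i, w i * ⨅ j, a j := by rw [← Finset.sum_mul, hw₁, one_mul]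
    _ ≤ ∑ i, w i * a i := Finset.sum_le_sum fun i _ =>
        mul_le_mul_of_nonneg_left (ciInf_le (Set.finite_range a).bddBelow i) (hw₀ i)

section Simplex

variable {m K : ℕ}

theorem convex_simplex : Convex ℝ (simplex K) := by
  rintro x ⟨hx₀, hx₁⟩ y ⟨hy₀, hy₁⟩ a b ha hb hab
  refine ⟨fun i => ?_, ?_⟩
  · simp only [PiLp.add_apply, PiLp.smul_apply, smul_eq_mul]
    have := hx₀ i; have := hy₀ i
    positivity
  · simp only [PiLp.add_apply, PiLp.smul_apply, smul_eq_mul, Finset.sum_add_distrib,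
      ← Finset.mul_sum, hx₁, hy₁, mul_one, hab]

theorem single_mem_simplex (i : Fin K) : EuclideanSpace.single i (1 : ℝ) ∈ simplex K := by
  refine ⟨fun j => ?_, by simp⟩
  by_cases h : j = i <;> simp [h]

theorem nonempty_of_mem_simplex {w : Euc K} (hw : w ∈ simplex K) : Nonempty (Fin K) := by
  by_contra h
  rw [not_nonempty_iff] at h
  simpa using hw.2

theorem comb_single (g : Fin K → Euc m) (i : Fin K) :
    comb g (EuclideanSpace.single i (1 : ℝ)) = g i := by
  simp [comb]

theorem inner_comb (g : Fin K → Euc m) (w : Euc K) (d : Euc m) :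
    ⟪comb g w, d⟫ = ∑ i, w i * ⟪g i, d⟫ := by
  simp [comb, sum_inner, real_inner_smul_left]

theorem convex_comb_add_image (g : Fin K → Euc m) (c : Euc m) :
    Convex ℝ ((fun u => comb g u + c) '' simplex K) := by
  rintro _ ⟨x, hx, rfl⟩ _ ⟨y, hy, rfl⟩ a b ha hb hab
  refine ⟨a • x + b • y, convex_simplex hx hy ha hb hab, ?_⟩
  simp only [comb, PiLp.add_apply, PiLp.smul_apply, smul_eq_mul, add_smul, mul_smul,
    Finset.sum_add_distrib, ← Finset.smul_sum]
  match_scalars <;> simp [hab]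

theorem ciInf_inner_le_inner_comb (g : Fin K → Euc m) {w : Euc K} (hw : w ∈ simplex K)
    (d : Euc m) : ⨅ i, ⟪g i, d⟫ ≤ ⟪comb g w, d⟫ := by
  rw [inner_comb]
  exact ciInf_le_sum_mul _ _ hw.1 hw.2

end Simplex

section Objective

variable {m K : ℕ} (g : Fin K → Euc m) (g0 : Euc m) (lam : ℝ)

def objective (d : Euc m) : ℝ := (⨅ i, ⟪g i, d⟫) - (1/2) * ‖d‖ ^ 2 + lam * ⟪g0, d⟫

theorem objective_le {w : Euc K} (hw : w ∈ simplex K) (d : Euc m) :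
    objective g g0 lam d ≤
      (1/2) * ‖comb g w + lam • g0‖ ^ 2 - (1/2) * ‖comb g w + lam • g0 - d‖ ^ 2 := by
  have hinf := ciInf_inner_le_inner_comb g hw d
  have hlin : ⟪comb g w + lam • g0, d⟫ = ⟪comb g w, d⟫ + lam * ⟪g0, d⟫ := by
    rw [inner_add_left, real_inner_smul_left]
  rw [objective, norm_sub_sq_real, hlin]
  linarith

variable {g g0 lam}

theorem isMinOn_norm_of_forall_le {w : Euc K} (hw : ∀ u ∈ simplex K,
      (1/2) * ‖comb g w + lam • g0‖ ^ 2 ≤ (1/2) * ‖comb g u + lam • g0‖ ^ 2) :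
    IsMinOn (‖·‖) ((fun u => comb g u + lam • g0) '' simplex K) (comb g w + lam • g0) := by
  rintro _ ⟨u, hu, rfl⟩
  have := hw u hu
  exact pow_le_pow_iff_left₀ (norm_nonneg _) (norm_nonneg _) two_ne_zero |>.mp (by linarith)

theorem ciInf_inner_eq_inner_comb {w : Euc K} (hw : w ∈ simplex K)
    (hmin : IsMinOn (‖·‖) ((fun u => comb g u + lam • g0) '' simplex K) (comb g w + lam • g0)) :
    ⨅ i, ⟪g i, comb g w + lam • g0⟫ = ⟪comb g w, comb g w + lam • g0⟫ := by
  have : Nonempty (Fin K) := nonempty_of_mem_simplex hw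
  refine le_antisymm (ciInf_inner_le_inner_comb g hw _) (le_ciInf fun i => ?_)
  have h := (convex_comb_add_image g (lam • g0)).inner_sub_nonneg_of_isMinOn_norm
    ⟨w, hw, rfl⟩ hmin ⟨_, single_mem_simplex i, rfl⟩
  simp only [comb_single, add_sub_add_right_eq_sub, inner_sub_right] at h
  rw [real_inner_comm (g i), real_inner_comm (comb g w)] at h
  linarith

theorem objective_eq {w : Euc K} (hw : w ∈ simplex K)
    (hmin : IsMinOn (‖·‖) ((fun u => comb g u + lam • g0) '' simplex K) (comb g w + lam • g0)) :
    objective g g0 lam (comb g w + lam • g0) = (1/2) * ‖comb g w + lam • g0‖ ^ 2 := by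
  have hsq : ‖comb g w + lam • g0‖ ^ 2 =
      ⟪comb g w, comb g w + lam • g0⟫ + lam * ⟪g0, comb g w + lam • g0⟫ := by
    rw [← real_inner_self_eq_norm_sq]
    nth_rw 1 [inner_add_left, real_inner_smul_left]
  rw [objective, ciInf_inner_eq_inner_comb hw hmin, hsq]
  ring

end Objective

theorem stmt0_general {m K : ℕ}
    (g : Fin K → Euc m) (g0 : Euc m) (lam : ℝ)
    (w1 : Euc K) (hw1mem : w1 ∈ simplex K)
    (hw1min : ∀ u ∈ simplex K,
      (1/2) * ‖comb g w1 + lam • g0‖ ^ 2 ≤ (1/2) * ‖comb g u + lam • g0‖ ^ 2) :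
    -- `d* = g_{w*_λ} + λ g₀` is a maximizer
    (∀ d : Euc m,
        (⨅ i : Fin K, ⟪g i, d⟫) - (1/2) * ‖d‖ ^ 2 + lam * ⟪g0, d⟫
          ≤ (⨅ i : Fin K, ⟪g i, comb g w1 + lam • g0⟫)
            - (1/2) * ‖comb g w1 + lam • g0‖ ^ 2
            + lam * ⟪g0, comb g w1 + lam • g0⟫) ∧
    -- and it is the unique maximizer
    (∀ d : Euc m,
        (∀ d' : Euc m,
            (⨅ i : Fin K, ⟪g i, d'⟫) - (1/2) * ‖d'‖ ^ 2 + lam * ⟪g0, d'⟫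
              ≤ (⨅ i : Fin K, ⟪g i, d⟫) - (1/2) * ‖d‖ ^ 2 + lam * ⟪g0, d⟫) →
          d = comb g w1 + lam • g0) ∧
    -- the optimal value of the max problem is `(1/2)‖g_{w*_λ} + λ g₀‖²`
    ((⨅ i : Fin K, ⟪g i, comb g w1 + lam • g0⟫)
        - (1/2) * ‖comb g w1 + lam • g0‖ ^ 2
        + lam * ⟪g0, comb g w1 + lam • g0⟫
      = (1/2) * ‖comb g w1 + lam • g0‖ ^ 2) ∧
    -- which equals `(1/2) min_{w ∈ W} ‖g_w + λ g₀‖²`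
    ((1/2) * ‖comb g w1 + lam • g0‖ ^ 2
      = sInf ((fun u => (1/2) * ‖comb g u + lam • g0‖ ^ 2) '' simplex K)) ∧
    -- and `g_{w*}` is the same for every minimizer `w*`
    (∀ w2 ∈ simplex K,
        (∀ u ∈ simplex K,
            (1/2) * ‖comb g w2 + lam • g0‖ ^ 2 ≤ (1/2) * ‖comb g u + lam • g0‖ ^ 2) →
        comb g w2 = comb g w1) := by
  have hmin₁ := isMinOn_norm_of_forall_le hw1min
  have hval := objective_eq hw1mem hmin₁
  refine ⟨fun d => ?_, fun d hd => ?_, hval, ?_, fun w2 hw2mem hw2min => ?_⟩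
  · change objective g g0 lam d ≤ objective g g0 lam _
    rw [hval]
    linarith [objective_le g g0 lam hw1mem d, sq_nonneg ‖comb g w1 + lam • g0 - d‖]
  · have hle : objective g g0 lam (comb g w1 + lam • g0) ≤ objective g g0 lam d := hd _
    rw [hval] at hle
    have hdist : ‖comb g w1 + lam • g0 - d‖ ^ 2 ≤ 0 := by
      linarith [objective_le g g0 lam hw1mem d]
    rw [eq_comm, ← sub_eq_zero, ← norm_eq_zero]
    exact pow_eq_zero_iff two_ne_zero |>.mp (le_antisymm hdist (sq_nonneg _))
  · symm
    refine IsLeast.csInf_eq ⟨Set.mem_image_of_mem _ hw1mem, ?_⟩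
    rintro _ ⟨u, hu, rfl⟩
    exact hw1min u hu
  · exact add_right_cancel <| (convex_comb_add_image g (lam • g0)).eq_of_isMinOn_norm
      ⟨w2, hw2mem, rfl⟩ ⟨w1, hw1mem, rfl⟩ (isMinOn_norm_of_forall_le hw2min) hmin₁

/-- The direction-oriented MOO problem
`max_d [ min_i ⟪g i, d⟫ - ‖d‖²/2 + λ⟪g₀, d⟫ ]` has the unique maximizer
`d* = g_{w*_λ} + λ g₀`, where `w*_λ` is any minimizer over the simplex of
`(1/2)‖g_w + λ g₀‖²`; its optimal value is `(1/2) min_{w ∈ W} ‖g_w + λ g₀‖²`,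
and `g_{w*_λ}` does not depend on the choice of minimizer. -/
theorem stmt0 {m K : ℕ} (hK : 2 ≤ K) (hm : 1 ≤ m)
    (g : Fin K → Euc m) (g0 : Euc m) (lam : ℝ) (hlam : 0 ≤ lam)
    (w1 : Euc K) (hw1mem : w1 ∈ simplex K)
    (hw1min : ∀ u ∈ simplex K,
      (1/2) * ‖comb g w1 + lam • g0‖ ^ 2 ≤ (1/2) * ‖comb g u + lam • g0‖ ^ 2) :
    -- `d* = g_{w*_λ} + λ g₀` is a maximizer
    (∀ d : Euc m,
        (⨅ i : Fin K, ⟪g i, d⟫) - (1/2) * ‖d‖ ^ 2 + lam * ⟪g0, d⟫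
          ≤ (⨅ i : Fin K, ⟪g i, comb g w1 + lam • g0⟫)
            - (1/2) * ‖comb g w1 + lam • g0‖ ^ 2
            + lam * ⟪g0, comb g w1 + lam • g0⟫) ∧
    -- and it is the unique maximizer
    (∀ d : Euc m,
        (∀ d' : Euc m,
            (⨅ i : Fin K, ⟪g i, d'⟫) - (1/2) * ‖d'‖ ^ 2 + lam * ⟪g0, d'⟫
              ≤ (⨅ i : Fin K, ⟪g i, d⟫) - (1/2) * ‖d‖ ^ 2 + lam * ⟪g0, d⟫) →
          d = comb g w1 + lam • g0) ∧
    -- the optimal value of the max problem is `(1/2)‖g_{w*_λ} + λ g₀‖²`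
    ((⨅ i : Fin K, ⟪g i, comb g w1 + lam • g0⟫)
        - (1/2) * ‖comb g w1 + lam • g0‖ ^ 2
        + lam * ⟪g0, comb g w1 + lam • g0⟫
      = (1/2) * ‖comb g w1 + lam • g0‖ ^ 2) ∧
    -- which equals `(1/2) min_{w ∈ W} ‖g_w + λ g₀‖²`
    ((1/2) * ‖comb g w1 + lam • g0‖ ^ 2
      = sInf ((fun u => (1/2) * ‖comb g u + lam • g0‖ ^ 2) '' simplex K)) ∧
    -- and `g_{w*}` is the same for every minimizer `w*`
    (∀ w2 ∈ simplex K,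
        (∀ u ∈ simplex K,
            (1/2) * ‖comb g w2 + lam • g0‖ ^ 2 ≤ (1/2) * ‖comb g u + lam • g0‖ ^ 2) →
        comb g w2 = comb g w1) :=
  stmt0_general g g0 lam w1 hw1mem hw1min
end
end

section
/- Let G ∈ ℝ^{m×K}, g_0 ∈ ℝ^m, λ ≥ 0 and ρ > 0. Let w*_λ ∈ argmin_{w∈W} (1/2)‖Gw + λ g_0‖² and let w*_{ρ,λ} be the (unique) minimizer over W of (1/2)‖Gw + λ g_0‖² + (ρ/2)‖w‖². Then ‖G w*_{ρ,λ} − G w*_λ‖² ≤ ‖G w*_{ρ,λ} + λ g_0‖² − ‖G w*_λ + λ g_0‖² ≤ ρ/2. -/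
open MeasureTheory ProbabilityTheory BigOperators
open scoped RealInnerProductSpace ENNReal NNReal

noncomputable section

lemma comb_affine {m K : ℕ} (g : Fin K → Euc m) (w u : Euc K) (t : ℝ) :
    comb g (w + t • (u - w)) = comb g w + t • (comb g u - comb g w) := by
  unfold comb
  have h : ∀ i : Fin K, (w + t • (u - w)) i • g i
      = w i • g i + (t • (u i • g i) - t • (w i • g i)) := by
    intro i
    have hap : (w + t • (u - w)) i = w i + t * (u i - w i) := by
      simp [Pi.add_apply, Pi.smul_apply, smul_eq_mul]
    rw [hap, add_smul, mul_smul, sub_smul, smul_sub]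
  rw [Finset.sum_congr rfl fun i _ => h i, Finset.sum_add_distrib, Finset.sum_sub_distrib,
    ← Finset.smul_sum, ← Finset.smul_sum, ← smul_sub]

lemma simplex_convex_pt {K : ℕ} {w u : Euc K} (hw : w ∈ simplex K) (hu : u ∈ simplex K)
    {t : ℝ} (ht0 : 0 ≤ t) (ht1 : t ≤ 1) : w + t • (u - w) ∈ simplex K := by
  obtain ⟨hw0, hw1⟩ := hw
  obtain ⟨hu0, hu1⟩ := hu
  constructor
  · intro i
    have hap : (w + t • (u - w)) i = w i + t * (u i - w i) := by
      simp [Pi.add_apply, Pi.smul_apply, smul_eq_mul]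
    rw [hap]
    nlinarith [hw0 i, hu0 i]
  · have hap : ∀ i, (w + t • (u - w)) i = w i + t * (u i - w i) := by
      intro i; simp [Pi.add_apply, Pi.smul_apply, smul_eq_mul]
    rw [Finset.sum_congr rfl fun i _ => hap i, Finset.sum_add_distrib, hw1,
      ← Finset.mul_sum, Finset.sum_sub_distrib, hu1, hw1]
    ring

lemma simplex_norm_le_one {K : ℕ} {w : Euc K} (hw : w ∈ simplex K) : ‖w‖ ≤ 1 := by
  obtain ⟨hw0, hw1⟩ := hw
  have h1 : ∀ i, w i ≤ 1 := by
    intro i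
    calc w i ≤ ∑ j, w j := Finset.single_le_sum (fun j _ => hw0 j) (Finset.mem_univ i)
    _ = 1 := hw1
  have h2 : ‖w‖ ^ 2 ≤ 1 := by
    rw [EuclideanSpace.norm_eq, Real.sq_sqrt (by positivity)]
    calc (∑ i, ‖w i‖ ^ 2) = ∑ i, (w i) ^ 2 := by
          refine Finset.sum_congr rfl fun i _ => ?_
          rw [Real.norm_eq_abs, sq_abs]
      _ ≤ ∑ i, w i := Finset.sum_le_sum fun i _ => by nlinarith [hw0 i, h1 i]
      _ = 1 := hw1
  nlinarith [norm_nonneg w]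

lemma foc {m K : ℕ} (g : Fin K → Euc m) (c : Euc m) (ρ : ℝ) (hρ : 0 ≤ ρ)
    (w : Euc K) (hw : w ∈ simplex K)
    (hmin : ∀ u ∈ simplex K, (1/2) * ‖comb g w + c‖ ^ 2 + (ρ/2) * ‖w‖ ^ 2
      ≤ (1/2) * ‖comb g u + c‖ ^ 2 + (ρ/2) * ‖u‖ ^ 2)
    (u : Euc K) (hu : u ∈ simplex K) :
    0 ≤ ⟪comb g w + c, comb g u - comb g w⟫ + ρ * ⟪w, u - w⟫ := by
  set b := comb g w + c with hb
  set d := comb g u - comb g w with hd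
  set e := u - w with he
  set S : ℝ := ⟪b, d⟫ + ρ * ⟪w, e⟫ with hS
  set C : ℝ := ‖d‖ ^ 2 + ρ * ‖e‖ ^ 2 with hC
  have hC0 : 0 ≤ C := by positivity
  have key : ∀ t : ℝ, 0 < t → t ≤ 1 → 0 ≤ t * S + t ^ 2 / 2 * C := by
    intro t ht ht1
    have hmem := simplex_convex_pt hw hu ht.le ht1
    have h := hmin _ hmem
    rw [comb_affine] at h
    have e1 : comb g w + t • (comb g u - comb g w) + c = b + t • d := by
      rw [hb, hd]; abel
    rw [e1] at h
    have h2 : ‖b + t • d‖ ^ 2 = ‖b‖ ^ 2 + 2 * (t * ⟪b, d⟫) + t ^ 2 * ‖d‖ ^ 2 := by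
      rw [norm_add_sq_real, real_inner_smul_right, norm_smul, mul_pow, Real.norm_eq_abs, sq_abs]
    have h3 : ‖w + t • e‖ ^ 2 = ‖w‖ ^ 2 + 2 * (t * ⟪w, e⟫) + t ^ 2 * ‖e‖ ^ 2 := by
      rw [norm_add_sq_real, real_inner_smul_right, norm_smul, mul_pow, Real.norm_eq_abs, sq_abs]
    rw [h2, h3] at h
    simp only [hS, hC]
    nlinarith [h]
  by_contra hcon
  push_neg at hcon
  rcases eq_or_lt_of_le hC0 with hCz | hCpos
  · have := key 1 one_pos le_rfl
    nlinarith
  · have htpos : 0 < min 1 (-S / C) := by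
      exact lt_min one_pos (div_pos (by linarith) hCpos)
    have := key _ htpos (min_le_left _ _)
    have htle : min 1 (-S / C) ≤ -S / C := min_le_right _ _
    have htC : min 1 (-S / C) * C ≤ -S := (le_div_iff₀ hCpos).mp htle
    nlinarith [htpos, htC, this]

/-- With `w*_λ` a minimizer over `W` of `(1/2)‖Gw + λg₀‖²` and
`w*_{ρ,λ}` the minimizer over `W` of `(1/2)‖Gw + λg₀‖² + (ρ/2)‖w‖²`,
`‖G w*_{ρ,λ} − G w*_λ‖² ≤ ‖G w*_{ρ,λ} + λg₀‖² − ‖G w*_λ + λg₀‖² ≤ ρ/2`. -/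
theorem stmt1 {m K : ℕ} (hK : 2 ≤ K) (hm : 1 ≤ m)
    (g : Fin K → Euc m) (g0 : Euc m) (lam ρ : ℝ) (hlam : 0 ≤ lam) (hρ : 0 < ρ)
    (w1 : Euc K) (hw1mem : w1 ∈ simplex K)
    (hw1min : ∀ u ∈ simplex K,
      (1/2) * ‖comb g w1 + lam • g0‖ ^ 2 ≤ (1/2) * ‖comb g u + lam • g0‖ ^ 2)
    (wρ : Euc K) (hwρmem : wρ ∈ simplex K)
    (hwρmin : ∀ u ∈ simplex K,
      (1/2) * ‖comb g wρ + lam • g0‖ ^ 2 + (ρ/2) * ‖wρ‖ ^ 2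
        ≤ (1/2) * ‖comb g u + lam • g0‖ ^ 2 + (ρ/2) * ‖u‖ ^ 2) :
    ‖comb g wρ - comb g w1‖ ^ 2
        ≤ ‖comb g wρ + lam • g0‖ ^ 2 - ‖comb g w1 + lam • g0‖ ^ 2 ∧
      ‖comb g wρ + lam • g0‖ ^ 2 - ‖comb g w1 + lam • g0‖ ^ 2 ≤ ρ / 2 := by
  set a := comb g wρ + lam • g0 with ha
  set b := comb g w1 + lam • g0 with hb
  have hmin0 : ∀ u ∈ simplex K, (1/2) * ‖comb g w1 + lam • g0‖ ^ 2
      + ((0:ℝ)/2) * ‖w1‖ ^ 2 ≤ (1/2) * ‖comb g u + lam • g0‖ ^ 2 + ((0:ℝ)/2) * ‖u‖ ^ 2 := by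
    intro u hu
    simpa using hw1min u hu
  have F1 := foc g (lam • g0) 0 le_rfl w1 hw1mem hmin0 wρ hwρmem
  have Fρ := foc g (lam • g0) ρ hρ.le wρ hwρmem hwρmin w1 hw1mem
  have hab : comb g wρ - comb g w1 = a - b := by rw [ha, hb]; abel
  have hba : comb g w1 - comb g wρ = b - a := by rw [ha, hb]; abel
  rw [hab] at F1 ⊢
  rw [hba] at Fρ
  simp only [zero_mul, add_zero] at F1
  have hF1 : 0 ≤ ⟪a, b⟫ - ‖b‖ ^ 2 := by
    have : ⟪b, a - b⟫ = ⟪a, b⟫ - ‖b‖ ^ 2 := by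
      rw [inner_sub_right, real_inner_comm, real_inner_self_eq_norm_sq]
    linarith [F1, this.symm.le, this.le]
  have hFρ : 0 ≤ (⟪a, b⟫ - ‖a‖ ^ 2) + ρ * (⟪wρ, w1⟫ - ‖wρ‖ ^ 2) := by
    have h1 : ⟪a, b - a⟫ = ⟪a, b⟫ - ‖a‖ ^ 2 := by
      rw [inner_sub_right, real_inner_self_eq_norm_sq]
    have h2 : ⟪wρ, w1 - wρ⟫ = ⟪wρ, w1⟫ - ‖wρ‖ ^ 2 := by
      rw [inner_sub_right, real_inner_self_eq_norm_sq]
    rw [h1, h2] at Fρ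
    exact Fρ
  have hns : ‖a - b‖ ^ 2 = ‖a‖ ^ 2 - 2 * ⟪a, b⟫ + ‖b‖ ^ 2 := norm_sub_sq_real a b
  constructor
  · linarith [hF1, hns]
  · have hcs : ⟪wρ, w1⟫ ≤ ‖wρ‖ * ‖w1‖ := real_inner_le_norm wρ w1
    have hw1le : ‖w1‖ ≤ 1 := simplex_norm_le_one hw1mem
    have hrnn : 0 ≤ ‖wρ‖ := norm_nonneg wρ
    have h4 : 0 ≤ ρ * ‖wρ‖ * (1 - ‖w1‖) :=
      mul_nonneg (mul_nonneg hρ.le hrnn) (by linarith)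
    have h5 : 0 ≤ ρ * (‖wρ‖ - 1/2) ^ 2 := mul_nonneg hρ.le (sq_nonneg _)
    nlinarith [hFρ, hns, sq_nonneg ‖a - b‖, hcs, h4, h5, hρ.le]
end
end
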